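/- Let W ∈ ℝ^{n×p} be a matrix, Λ ∈ ℝ^{p×p} symmetric positive definite, V := WᵀW + Λ, θ* ∈ ℝ^p, η ∈ ℝ^n, and θ̂ := V⁻¹ Wᵀ (Wθ* + η). Then for every w ∈ ℝ^p, |wᵀ(θ̂ − θ*)| ≤ ‖θ*‖_Λ · ‖w‖_{V⁻¹} + |wᵀ V⁻¹ Wᵀ η|, where ‖x‖_A := √(xᵀAx) for a positive semidefinite matrix A. -/

import Mathlib

/-! Since `V⁻¹ (WᵀW) = 1 - V⁻¹Λ`, the error `θ̂ - θ*` is `V⁻¹Wᵀη - V⁻¹Λθ*`. With `u = V⁻¹w`, the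
bias term is `uᵀΛθ*`, which Cauchy–Schwarz in the semi-inner product of `Λ` bounds by
`‖θ*‖_Λ ‖u‖_Λ`, and `‖u‖_Λ² ≤ ‖u‖_V² = ‖w‖_{V⁻¹}²` because `WᵀW` is positive semidefinite. -/

open Matrix

namespace Matrix

variable {ι κ : Type*} [Fintype ι] [Fintype κ]

theorem PosSemidef.abs_dotProduct_mulVec_le {A : Matrix ι ι ℝ} (hA : A.PosSemidef)
    (x y : ι → ℝ) :
    |x ⬝ᵥ (A *ᵥ y)| ≤ √(x ⬝ᵥ (A *ᵥ x)) * √(y ⬝ᵥ (A *ᵥ y)) := by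
  let := A.toSeminormedAddCommGroup hA
  let := A.toInnerProductSpace hA
  have hinner (a b : ι → ℝ) : inner ℝ a b = a ⬝ᵥ (A *ᵥ b) := dotProduct_comm _ _
  have hcs := real_inner_mul_inner_self_le x y
  rw [hinner, hinner, hinner] at hcs
  have hx : 0 ≤ x ⬝ᵥ (A *ᵥ x) := by simpa using hA.dotProduct_mulVec_nonneg x
  rw [← Real.sqrt_mul hx, ← Real.sqrt_sq_eq_abs]
  exact Real.sqrt_le_sqrt (by rwa [sq])

variable [DecidableEq ι]

theorem inv_mul_transpose_mulVec_add_sub {R : Type*} [CommRing R] (W : Matrix κ ι R)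
    (Λ : Matrix ι ι R) (hdet : IsUnit (Wᵀ * W + Λ).det) (θ : ι → R) (η : κ → R) :
    ((Wᵀ * W + Λ)⁻¹ * Wᵀ) *ᵥ (W *ᵥ θ + η) - θ
      = ((Wᵀ * W + Λ)⁻¹ * Wᵀ) *ᵥ η - (Wᵀ * W + Λ)⁻¹ *ᵥ (Λ *ᵥ θ) := by
  have hWW : (Wᵀ * W + Λ)⁻¹ * (Wᵀ * W) = 1 - (Wᵀ * W + Λ)⁻¹ * Λ := by
    rw [eq_sub_iff_add_eq, ← Matrix.mul_add, nonsing_inv_mul _ hdet]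
  rw [mulVec_add, mulVec_mulVec, Matrix.mul_assoc, hWW, sub_mulVec, one_mulVec,
    ← mulVec_mulVec]
  abel

theorem abs_dotProduct_inv_mulVec_mulVec_le {S Λ : Matrix ι ι ℝ} (hS : S.PosSemidef)
    (hΛ : Λ.PosSemidef) (hdet : IsUnit (S + Λ).det) (θ w : ι → ℝ) :
    |w ⬝ᵥ ((S + Λ)⁻¹ *ᵥ (Λ *ᵥ θ))|
      ≤ √(θ ⬝ᵥ (Λ *ᵥ θ)) * √(w ⬝ᵥ ((S + Λ)⁻¹ *ᵥ w)) := by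
  set u := (S + Λ)⁻¹ *ᵥ w
  have hinv_symm : ((S + Λ)⁻¹)ᵀ = (S + Λ)⁻¹ := by
    have hsymm : (S + Λ)ᵀ = S + Λ := by
      simpa only [conjTranspose_eq_transpose_of_trivial] using (hS.add hΛ).isHermitian.eq
    rw [transpose_nonsing_inv, hsymm]
  have hmove (z : ι → ℝ) : w ⬝ᵥ ((S + Λ)⁻¹ *ᵥ z) = u ⬝ᵥ z := by
    rw [← hinv_symm, dotProduct_transpose_mulVec, dotProduct_comm]
  have hu : (S + Λ) *ᵥ u = w := by rw [mulVec_mulVec, mul_nonsing_inv _ hdet, one_mulVec]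
  have hquad : w ⬝ᵥ ((S + Λ)⁻¹ *ᵥ w) = u ⬝ᵥ (S *ᵥ u) + u ⬝ᵥ (Λ *ᵥ u) := by
    rw [hmove, ← hu, add_mulVec, dotProduct_add]
  have hSu : 0 ≤ u ⬝ᵥ (S *ᵥ u) := by simpa using hS.dotProduct_mulVec_nonneg u
  calc |w ⬝ᵥ ((S + Λ)⁻¹ *ᵥ (Λ *ᵥ θ))| = |u ⬝ᵥ (Λ *ᵥ θ)| := by rw [hmove]
    _ ≤ √(u ⬝ᵥ (Λ *ᵥ u)) * √(θ ⬝ᵥ (Λ *ᵥ θ)) := hΛ.abs_dotProduct_mulVec_le u θ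
    _ ≤ √(w ⬝ᵥ ((S + Λ)⁻¹ *ᵥ w)) * √(θ ⬝ᵥ (Λ *ᵥ θ)) := by gcongr; linarith
    _ = √(θ ⬝ᵥ (Λ *ᵥ θ)) * √(w ⬝ᵥ ((S + Λ)⁻¹ *ᵥ w)) := mul_comm _ _

end Matrix

/-- Let `W ∈ ℝ^{n×p}`, `Λ ∈ ℝ^{p×p}` symmetric positive definite, `V := WᵀW + Λ`,
`θ* ∈ ℝ^p`, `η ∈ ℝ^n`, and `θ̂ := V⁻¹ Wᵀ (Wθ* + η)`. Then for every `w ∈ ℝ^p`,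
`|wᵀ(θ̂ − θ*)| ≤ ‖θ*‖_Λ ⬝ ‖w‖_{V⁻¹} + |wᵀ V⁻¹ Wᵀ η|`, where `‖x‖_A := √(xᵀ A x)`. -/
theorem reg_least_squares_error_bound {n p : ℕ}
    (W : Matrix (Fin n) (Fin p) ℝ) (Λ : Matrix (Fin p) (Fin p) ℝ) (hΛ : Λ.PosDef)
    (θstar : Fin p → ℝ) (η : Fin n → ℝ)
    (V : Matrix (Fin p) (Fin p) ℝ) (hV : V = Wᵀ * W + Λ)
    (θhat : Fin p → ℝ) (hθhat : θhat = (V⁻¹ * Wᵀ) *ᵥ (W *ᵥ θstar + η))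
    (w : Fin p → ℝ) :
    |w ⬝ᵥ (θhat - θstar)| ≤
      Real.sqrt (θstar ⬝ᵥ (Λ *ᵥ θstar)) * Real.sqrt (w ⬝ᵥ (V⁻¹ *ᵥ w))
        + |w ⬝ᵥ ((V⁻¹ * Wᵀ) *ᵥ η)| := by
  have hWW : (Wᵀ * W).PosSemidef := by
    simpa only [conjTranspose_eq_transpose_of_trivial] using posSemidef_conjTranspose_mul_self W
  have hdet : IsUnit (Wᵀ * W + Λ).det := (PosDef.posSemidef_add hWW hΛ).det_pos.ne'.isUnit
  have hbias := abs_dotProduct_inv_mulVec_mulVec_le hWW hΛ.posSemidef hdet θstar w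
  subst hV hθhat
  rw [inv_mul_transpose_mulVec_add_sub W Λ hdet, dotProduct_sub]
  exact (abs_sub _ _).trans (by linarith)
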